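/- Cospatiality of the residual and the auxiliary block vector: Under the hypotheses of the cospatial residual relation (B = V_1 B̂, the block Arnoldi relation A 𝒱_m = 𝒱_m ℋ_m + V_{m+1} H_{m+1,m} Ê_m^*, ℋ_m + M Ê_m^* invertible, Ξ_m := (ℋ_m + M Ê_m^*)^{-1} Ê_1 B̂, X_m := 𝒱_m Ξ_m, R_m := B − A X_m, U_m := 𝒱_m M − V_{m+1} H_{m+1,m}), if the s × s cospatial factor Ê_m^* Ξ_m is invertible, then the column space (range) of R_m equals the column space of U_m. -/
import Mathlib

open Matrix

noncomputable section

/-- Concatenation of `m` block vectors, each `n × s`, into an `n × (m·s)` matrix. -/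
def blockCat {n m s : ℕ} (V : Fin m → Matrix (Fin n) (Fin s) ℂ) :
    Matrix (Fin n) (Fin m × Fin s) ℂ :=
  Matrix.of fun i p => V p.1 i p.2

/-- The `k`-th block unit vector `Ê_k = e_k ⊗ I_s ∈ ℂ^{ms × s}`. -/
def blockUnit (m s : ℕ) (k : Fin m) : Matrix (Fin m × Fin s) (Fin s) ℂ :=
  Matrix.of fun p j => if p.1 = k ∧ p.2 = j then 1 else 0

lemma blockCat_mul_blockUnit {n m s : ℕ} (V : Fin m → Matrix (Fin n) (Fin s) ℂ) (k : Fin m) :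
    blockCat V * blockUnit m s k = V k := by
  ext i j
  simp [blockCat, blockUnit, Matrix.mul_apply, Fintype.sum_prod_type, ite_and]

lemma range_mul_isUnit {n s : ℕ} (U : Matrix (Fin n) (Fin s) ℂ)
    (C : Matrix (Fin s) (Fin s) ℂ) (hC : IsUnit C) :
    LinearMap.range (U * C).mulVecLin = LinearMap.range U.mulVecLin := by
  rw [Matrix.mulVecLin_mul]
  apply LinearMap.range_comp_of_range_eq_top
  rw [LinearMap.range_eq_top]
  intro x
  refine ⟨C⁻¹.mulVec x, ?_⟩
  have h1 : C * C⁻¹ = 1 := Matrix.mul_nonsing_inv C ((Matrix.isUnit_iff_isUnit_det C).mp hC)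
  simp [Matrix.mulVec_mulVec, h1]

/-- Cospatiality: if the cospatial factor is invertible, the column spaces of
`R_m` and `U_m` coincide. -/
theorem residual_cospatial_with_auxiliary
    {n m s : ℕ} (hn : 0 < n) (hm : 0 < m) (hs : 0 < s)
    (A : Matrix (Fin n) (Fin n) ℂ) (B : Matrix (Fin n) (Fin s) ℂ)
    (V : Fin (m + 1) → Matrix (Fin n) (Fin s) ℂ)
    (ℋ : Matrix (Fin m × Fin s) (Fin m × Fin s) ℂ)
    (H Bhat : Matrix (Fin s) (Fin s) ℂ)
    (M : Matrix (Fin m × Fin s) (Fin s) ℂ)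
    (Em E1 : Matrix (Fin m × Fin s) (Fin s) ℂ)
    (hEm : Em = blockUnit m s ⟨m - 1, by omega⟩)
    (hE1 : E1 = blockUnit m s ⟨0, hm⟩)
    (𝒱 : Matrix (Fin n) (Fin m × Fin s) ℂ)
    (h𝒱 : 𝒱 = blockCat fun k => V k.castSucc)
    (hB : B = V 0 * Bhat)
    (harnoldi : A * 𝒱 = 𝒱 * ℋ + V (Fin.last m) * H * Emᴴ)
    (hinv : IsUnit (ℋ + M * Emᴴ))
    (Ξ : Matrix (Fin m × Fin s) (Fin s) ℂ)
    (hΞ : Ξ = (ℋ + M * Emᴴ)⁻¹ * E1 * Bhat)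
    (X R U : Matrix (Fin n) (Fin s) ℂ)
    (hX : X = 𝒱 * Ξ) (hR : R = B - A * X)
    (hU : U = 𝒱 * M - V (Fin.last m) * H)
    (hfac : IsUnit (Emᴴ * Ξ)) :
    LinearMap.range R.mulVecLin = LinearMap.range U.mulVecLin := by
  have hVE1 : 𝒱 * E1 = V 0 := by
    have h0 : ((⟨0, hm⟩ : Fin m).castSucc : Fin (m + 1)) = 0 := Fin.ext rfl
    rw [h𝒱, hE1, blockCat_mul_blockUnit, h0]
  have hcancel : (ℋ + M * Emᴴ) * Ξ = E1 * Bhat := by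
    rw [hΞ, ← Matrix.mul_assoc, ← Matrix.mul_assoc,
      Matrix.mul_nonsing_inv _ ((Matrix.isUnit_iff_isUnit_det _).mp hinv), Matrix.one_mul]
  have hHΞ : ℋ * Ξ = E1 * Bhat - M * (Emᴴ * Ξ) := by
    rw [← hcancel]; rw [Matrix.add_mul, Matrix.mul_assoc]; abel
  have hRU : R = U * (Emᴴ * Ξ) := by
    rw [hR, hX, ← Matrix.mul_assoc, harnoldi, hU, hB, ← hVE1]
    rw [Matrix.add_mul, Matrix.sub_mul, Matrix.mul_assoc 𝒱 ℋ Ξ, hHΞ]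
    rw [Matrix.mul_sub, ← Matrix.mul_assoc, ← Matrix.mul_assoc, Matrix.mul_assoc (V (Fin.last m) * H)]
    abel
  rw [hRU]
  exact range_mul_isUnit _ _ hfac
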